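/- arXiv:1409.0183 — 3 statements merged into one kernel-verified Lean document; each statement's English description precedes it below -/
import Mathlib

section
/- Let f : 𝔻∖{0} → ℂ be holomorphic. Suppose that f admits no holomorphic extension to 𝔻, and that there exists a sequence (z_n) in 𝔻∖{0} with z_n → 0 such that (f(z_n)) converges in ℂ. Then there exists a sequence (w_n) in 𝔻∖{0} with w_n → 0 such that (f(w_n)) converges in ℂ and liminf_{n→∞} diam( f({z ∈ ℂ : |z| = |w_n|}) ) > 0, where diam denotes the Euclidean diameter of a subset of ℂ. -/
open Filter Metric Set Topology
open scoped Manifold ENNReal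

noncomputable section

/-- The inverse hyperbolic tangent. -/
def arctanh (x : ℝ) : ℝ := Real.log ((1 + x) / (1 - x)) / 2

/-- The Poincaré distance on the unit disc. -/
def poincareDist (a b : ℂ) : ℝ :=
  arctanh ‖(a - b) / (1 - (starRingEnd ℂ) a * b)‖

/-- The Kobayashi pseudodistance between two points of a complex manifold `M`
(modeled on the complex normed space `E`), computed with chains of holomorphic discs
whose images lie in the subset `U`.  The value is `∞` if no chain exists. -/
def kobayashiDistOn (E : Type*) [NormedAddCommGroup E] [NormedSpace ℂ E]
    {M : Type*} [TopologicalSpace M] [ChartedSpace E M] (U : Set M) (p q : M) : ℝ≥0∞ :=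
  ⨅ (m : ℕ) (f : Fin (m + 1) → ℂ → M) (ab : Fin (m + 1) → ℂ × ℂ)
    (_ : ∀ j, MDifferentiableOn 𝓘(ℂ, ℂ) 𝓘(ℂ, E) (f j) (ball (0 : ℂ) 1))
    (_ : ∀ j, f j '' ball (0 : ℂ) 1 ⊆ U)
    (_ : ∀ j, (ab j).1 ∈ ball (0 : ℂ) 1 ∧ (ab j).2 ∈ ball (0 : ℂ) 1)
    (_ : f 0 (ab 0).1 = p) (_ : f (Fin.last m) (ab (Fin.last m)).2 = q)
    (_ : ∀ j : Fin m, f j.castSucc (ab j.castSucc).2 = f j.succ (ab j.succ).1),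
    ENNReal.ofReal (∑ j, poincareDist (ab j).1 (ab j).2)

/-- A metric on a compact complex manifold `V` is admissible if (the metric induces the
topology of `V`, which is automatic here, and) there is a family of Kobayashi hyperbolic
open neighbourhoods `U x` of the points `x` of `V` on which the metric is dominated by
the Kobayashi pseudodistance of `U x`. -/
def IsAdmissible (E : Type*) [NormedAddCommGroup E] [NormedSpace ℂ E]
    (V : Type*) [MetricSpace V] [ChartedSpace E V] : Prop :=
  ∃ U : V → Set V, ∀ x : V, x ∈ U x ∧ IsOpen (U x) ∧
    (∀ p q : V, p ∈ U x → q ∈ U x → p ≠ q → 0 < kobayashiDistOn E (U x) p q) ∧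
    (∀ p q : V, p ∈ U x → q ∈ U x →
      ENNReal.ofReal (dist p q) ≤ kobayashiDistOn E (U x) p q)

/-- The Poincaré distance of the disc `𝔻(a,r)`. -/
def discDist (a : ℂ) (r : ℝ) (z w : ℂ) : ℝ :=
  arctanh (r * ‖z - w‖ /
    ‖(r : ℂ) ^ 2 - (starRingEnd ℂ) (z - a) * (w - a)‖)

/-- The Lipschitz constant `L_{f, 𝔻(a,r)}` of a map `f` on the disc `𝔻(a,r)`, with respect
to the Poincaré distance of `𝔻(a,r)` on the source and the metric of `V` on the target. -/
def LipConst {V : Type*} [MetricSpace V] (f : ℂ → V) (a : ℂ) (r : ℝ) : ℝ≥0∞ :=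
  ⨆ (w : ℂ) (_ : w ∈ ball a r) (w' : ℂ) (_ : w' ∈ ball a r) (_ : w ≠ w'),
    ENNReal.ofReal (dist (f w) (f w') / discDist a r w w')

/-- A family `F` of maps is normal on `D` if every sequence in `F` has a subsequence
converging uniformly on every compact subset of `D`. -/
def NormalOn {V : Type*} [MetricSpace V] (F : Set (ℂ → V)) (D : Set ℂ) : Prop :=
  ∀ f : ℕ → ℂ → V, (∀ n, f n ∈ F) →
    ∃ φ : ℕ → ℕ, StrictMono φ ∧ ∃ g : ℂ → V,
      ∀ K : Set ℂ, K ⊆ D → IsCompact K →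
        TendstoUniformlyOn (fun n => f (φ n)) g atTop K

theorem statement_0 (f : ℂ → ℂ)
    (hf : DifferentiableOn ℂ f (ball (0 : ℂ) 1 \ {0}))
    (hne : ¬ ∃ g : ℂ → ℂ, DifferentiableOn ℂ g (ball (0 : ℂ) 1) ∧
      Set.EqOn g f (ball (0 : ℂ) 1 \ {0}))
    (z : ℕ → ℂ) (hzmem : ∀ n, z n ∈ ball (0 : ℂ) 1 \ {0})
    (hz : Tendsto z atTop (𝓝 0))
    (hconv : ∃ L : ℂ, Tendsto (fun n => f (z n)) atTop (𝓝 L)) :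
    ∃ w : ℕ → ℂ, (∀ n, w n ∈ ball (0 : ℂ) 1 \ {0}) ∧ Tendsto w atTop (𝓝 0) ∧
      (∃ L : ℂ, Tendsto (fun n => f (w n)) atTop (𝓝 L)) ∧
      0 < atTop.liminf
        (fun n => EMetric.diam (f '' {ζ : ℂ | ‖ζ‖ = ‖w n‖})) := by
  classical
  obtain ⟨L, hL⟩ := hconv
  set d : ℕ → ℝ≥0∞ :=
    fun n => EMetric.diam (f '' {ζ : ℂ | ‖ζ‖ = ‖z n‖}) with hdd
  by_cases hpos : 0 < atTop.limsup d
  · obtain ⟨δ, hδ0, hδlt⟩ := exists_between hpos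
    have hfreq : ∃ᶠ n in atTop, δ < d n := Filter.frequently_lt_of_lt_limsup (by isBoundedDefault) hδlt
    obtain ⟨φ, hφ, hφd⟩ := Filter.extraction_of_frequently_atTop hfreq
    refine ⟨fun n => z (φ n), fun n => hzmem (φ n), hz.comp hφ.tendsto_atTop,
      ⟨L, hL.comp hφ.tendsto_atTop⟩, ?_⟩
    refine lt_of_lt_of_le hδ0 (Filter.le_liminf_of_le (by isBoundedDefault) ?_)
    exact Filter.Eventually.of_forall fun n => (hφd n).le
  · exfalso
    push_neg at hpos
    have hlim0 : atTop.limsup d = 0 := le_antisymm hpos (zero_le)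
    have hev1 : ∀ᶠ n in atTop, d n < 1 :=
      Filter.eventually_lt_of_limsup_lt (by rw [hlim0]; exact zero_lt_one)
    have hev2 : ∀ᶠ n in atTop, dist (f (z n)) L < 1 := by
      have := hL (Metric.ball_mem_nhds L one_pos)
      filter_upwards [this] with n hn using mem_ball.mp hn
    have hev := hev1.and hev2
    -- on each good circle, f is within distance 2 of L
    have hcirc : ∀ n, d n < 1 → dist (f (z n)) L < 1 →
        ∀ ζ : ℂ, ‖ζ‖ = ‖z n‖ → dist (f ζ) L ≤ 2 := by
      intro n h1 h2 ζ hζ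
      have hm1 : f ζ ∈ f '' {ζ : ℂ | ‖ζ‖ = ‖z n‖} := ⟨ζ, hζ, rfl⟩
      have hm2 : f (z n) ∈ f '' {ζ : ℂ | ‖ζ‖ = ‖z n‖} := ⟨z n, rfl, rfl⟩
      have hed : edist (f ζ) (f (z n)) ≤ ENNReal.ofReal 1 := by
        rw [ENNReal.ofReal_one]
        exact le_of_lt (lt_of_le_of_lt (EMetric.edist_le_diam_of_mem hm1 hm2) h1)
      have hdist : dist (f ζ) (f (z n)) ≤ 1 := (edist_le_ofReal one_pos.le).mp hed
      calc dist (f ζ) L ≤ dist (f ζ) (f (z n)) + dist (f (z n)) L := dist_triangle _ _ _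
        _ ≤ 1 + 1 := add_le_add hdist h2.le
        _ = 2 := by norm_num
    obtain ⟨N, hN⟩ := hev.exists
    set R : ℝ := ‖z N‖ with hR
    have hzN0 : z N ≠ 0 := fun h => (hzmem N).2 (by simp [h])
    have hR0 : 0 < R := by simpa [hR] using (norm_pos_iff.mpr hzN0)
    have hR1 : R < 1 := by
      have := (hzmem N).1
      rwa [mem_ball_zero_iff] at this
    -- key bound on the punctured ball of radius R
    have hbound : ∀ w : ℂ, w ≠ 0 → ‖w‖ < R → dist (f w) L ≤ 2 := by
      intro w hw0 hwR
      have haw : 0 < ‖w‖ := norm_pos_iff.mpr hw0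
      have hev3 : ∀ᶠ n in atTop, ‖z n‖ < ‖w‖ := by
        have hball : Metric.ball (0 : ℂ) (‖w‖) ∈ 𝓝 (0 : ℂ) :=
          Metric.ball_mem_nhds _ haw
        filter_upwards [hz.eventually_mem hball] with n hn
        rwa [mem_ball_zero_iff] at hn
      obtain ⟨m, ⟨hm1, hm2⟩, hm3⟩ := (hev.and hev3).exists
      set r : ℝ := ‖z m‖ with hrr
      have hr0 : 0 < r := norm_pos_iff.mpr (fun h => (hzmem m).2 (by simp [h]))
      set U : Set ℂ := ball (0 : ℂ) R \ closedBall (0 : ℂ) r with hU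
      have hUopen : IsOpen U := isOpen_ball.sdiff Metric.isClosed_closedBall
      have hUbd : Bornology.IsBounded U := Metric.isBounded_ball.subset diff_subset
      have hclos : closure U ⊆ closedBall (0 : ℂ) R \ ball (0 : ℂ) r := by
        refine closure_minimal ?_ (Metric.isClosed_closedBall.sdiff isOpen_ball)
        intro x hx
        exact ⟨ball_subset_closedBall hx.1, fun h => hx.2 (ball_subset_closedBall h)⟩
      have hsub : closedBall (0 : ℂ) R \ ball (0 : ℂ) r ⊆ ball (0 : ℂ) 1 \ {0} := by
        rintro x ⟨hx1, hx2⟩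
        rw [mem_closedBall_zero_iff] at hx1
        constructor
        · rw [mem_ball_zero_iff]; exact lt_of_le_of_lt hx1 hR1
        · intro h
          simp only [Set.mem_singleton_iff] at h
          exact hx2 (by rw [h, mem_ball_zero_iff]; simpa using hr0)
      have hdiffcl : DiffContOnCl ℂ (fun ζ => f ζ - L) U := by
        apply DifferentiableOn.diffContOnCl
        exact ((hf.mono (hclos.trans hsub)).sub (differentiableOn_const L))
      have hfr : ∀ x ∈ frontier U, ‖f x - L‖ ≤ 2 := by
        intro x hx
        have hxcl : x ∈ closedBall (0 : ℂ) R \ ball (0 : ℂ) r := hclos hx.1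
        have hxnU : x ∉ U := by
          rw [← hUopen.interior_eq]; exact fun h => hx.2 h
        obtain ⟨hxcl1, hxcl2⟩ := hxcl
        rw [mem_closedBall_zero_iff] at hxcl1
        have hxabs : ‖x‖ = R ∨ ‖x‖ = r := by
          by_contra hcon
          push_neg at hcon
          apply hxnU
          constructor
          · rw [mem_ball_zero_iff]
            exact lt_of_le_of_ne hxcl1 hcon.1
          · intro h
            rw [mem_closedBall_zero_iff] at h
            have : r ≤ ‖x‖ := by
              by_contra hlt
              push_neg at hlt
              exact hxcl2 (by rw [mem_ball_zero_iff]; exact hlt)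
            exact hcon.2 (le_antisymm h this)
        rw [← dist_eq_norm]
        rcases hxabs with h | h
        · exact hcirc N hN.1 hN.2 x h
        · exact hcirc m hm1 hm2 x h
      have hw2 : dist (f w) L ≤ 2 := by
        have hwU : w ∈ U := by
          constructor
          · rw [mem_ball_zero_iff]; exact hwR
          · intro h
            rw [mem_closedBall_zero_iff] at h
            exact absurd h (not_le.mpr hm3)
        have := Complex.norm_le_of_forall_mem_frontier_norm_le hUbd hdiffcl hfr
          (subset_closure hwU)
        rwa [← dist_eq_norm] at this
      exact hw2
    -- f is bounded on the punctured ball, so the singularity is removable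
    have hbdd : BddAbove (norm ∘ f '' (ball (0 : ℂ) R \ {0})) := by
      refine ⟨‖L‖ + 2, ?_⟩
      rintro y ⟨x, hx, rfl⟩
      have hx0 : x ≠ 0 := hx.2
      have hxR : ‖x‖ < R := by
        have := hx.1; rwa [mem_ball_zero_iff] at this
      have := hbound x hx0 hxR
      have h1 : ‖f x‖ ≤ ‖L‖ + ‖f x - L‖ := by
        calc ‖f x‖ = ‖L + (f x - L)‖ := by congr 1; ring
          _ ≤ ‖L‖ + ‖f x - L‖ := norm_add_le _ _
      rw [dist_eq_norm] at this
      simp only [Function.comp_apply]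
      linarith
    have hballmem : ball (0 : ℂ) R ∈ 𝓝 (0 : ℂ) := ball_mem_nhds _ hR0
    have hdfR : DifferentiableOn ℂ f (ball (0 : ℂ) R \ {0}) :=
      hf.mono (diff_subset_diff_left (ball_subset_ball hR1.le))
    have hg := Complex.differentiableOn_update_limUnder_of_bddAbove hballmem hdfR hbdd
    set g : ℂ → ℂ := Function.update f 0 (limUnder (𝓝[≠] (0 : ℂ)) f) with hgdef
    apply hne
    refine ⟨g, ?_, ?_⟩
    · intro x hx
      by_cases hx0 : x = 0
      · subst hx0
        exact (hg.differentiableAt hballmem).differentiableWithinAt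
      · have hfx : DifferentiableAt ℂ f x :=
          hf.differentiableAt ((isOpen_ball.sdiff isClosed_singleton).mem_nhds ⟨hx, hx0⟩)
        have heq : g =ᶠ[𝓝 x] f := by
          filter_upwards [isOpen_compl_singleton.mem_nhds (by simpa using hx0 :
            x ∈ ({0} : Set ℂ)ᶜ)] with y hy
          exact Function.update_of_ne hy _ _
        exact (hfx.congr_of_eventuallyEq heq).differentiableWithinAt
    · intro x hx
      exact Function.update_of_ne hx.2 _ _


end
end

section
/- Let V be a compact connected complex manifold equipped with an admissible metric δ. If every holomorphic map from ℂ to V is constant, then V is Kobayashi hyperbolic, i.e., d_V(p,q) > 0 for all distinct p, q ∈ V, where d_V is the Kobayashi pseudodistance of V. -/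
open Filter Metric Set Topology
open scoped Manifold ENNReal

set_option linter.unusedSectionVars false

noncomputable section

def Complex.abs : AbsoluteValue ℂ ℝ where
  toFun z := ‖z‖
  map_mul' := norm_mul
  nonneg' := norm_nonneg
  eq_zero' _ := norm_eq_zero
  add_le' := norm_add_le

theorem Complex.norm_eq_abs (z : ℂ) : ‖z‖ = Complex.abs z := rfl

theorem Complex.abs_apply (z : ℂ) : Complex.abs z = ‖z‖ := rfl

theorem Complex.abs_ofReal (r : ℝ) : Complex.abs (r : ℂ) = |r| := by
  show ‖(r : ℂ)‖ = |r|
  simp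

theorem Complex.abs_conj (z : ℂ) : Complex.abs ((starRingEnd ℂ) z) = Complex.abs z := by
  show ‖(starRingEnd ℂ) z‖ = ‖z‖
  simp

theorem Complex.sq_abs (z : ℂ) : Complex.abs z ^ 2 = Complex.normSq z := Complex.sq_norm z

theorem Complex.dist_eq_abs (z w : ℂ) : dist z w = Complex.abs (z - w) := Complex.dist_eq z w

namespace Brody

lemma arctanh_nonneg {x : ℝ} (hx : 0 ≤ x) : 0 ≤ arctanh x := by
  unfold arctanh
  rcases eq_or_ne x 1 with h | h
  · simp [h]
  · have h1 : (0:ℝ) < |1 - x| := abs_pos.mpr (sub_ne_zero.mpr (Ne.symm h))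
    have h2 : (0:ℝ) ≤ Real.log ((1 + x) / (1 - x)) := by
      rw [← Real.log_abs, abs_div]
      apply Real.log_nonneg
      rw [le_div_iff₀ h1, one_mul]
      have : |1 - x| ≤ 1 + x := abs_le.mpr ⟨by linarith, by linarith⟩
      calc |1 - x| ≤ 1 + x := this
        _ = |1 + x| := (abs_of_nonneg (by linarith)).symm
    linarith

lemma arctanh_le_three_mul {x : ℝ} (hx : 0 ≤ x) (hx1 : x ≤ 3/4) : arctanh x ≤ 3 * x := by
  unfold arctanh
  have h1 : (0:ℝ) < 1 + x := by linarith
  have h2 : (0:ℝ) < 1 - x := by linarith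
  rw [Real.log_div (by linarith) (by linarith)]
  have l1 : Real.log (1 + x) ≤ x := by
    have := Real.log_le_sub_one_of_pos h1
    linarith
  have l2 : -Real.log (1 - x) ≤ 4 * x := by
    have h3 : Real.log (1 - x)⁻¹ ≤ (1 - x)⁻¹ - 1 :=
      Real.log_le_sub_one_of_pos (by positivity)
    rw [Real.log_inv] at h3
    have h4 : (1 - x)⁻¹ - 1 = x / (1 - x) := by field_simp; ring
    have h5 : x / (1 - x) ≤ 4 * x := by
      rw [div_le_iff₀ h2]
      nlinarith
    linarith
  linarith

lemma half_le_arctanh {x : ℝ} (hx : 0 ≤ x) (hx1 : x < 1) : x / 2 ≤ arctanh x := by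
  unfold arctanh
  have h1 : (0:ℝ) < 1 + x := by linarith
  have h2 : (0:ℝ) < 1 - x := by linarith
  have hy : (0:ℝ) < (1 + x) / (1 - x) := by positivity
  have h3 : Real.log ((1 + x) / (1 - x))⁻¹ ≤ ((1 + x) / (1 - x))⁻¹ - 1 :=
    Real.log_le_sub_one_of_pos (by positivity)
  rw [Real.log_inv] at h3
  have h4 : ((1 + x) / (1 - x))⁻¹ = (1 - x) / (1 + x) := by
    rw [inv_div]
  have h5 : x ≤ Real.log ((1 + x) / (1 - x)) := by
    rw [h4] at h3
    have h6 : 1 - (1 - x) / (1 + x) = 2 * x / (1 + x) := by field_simp; ring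
    have h7 : x ≤ 2 * x / (1 + x) := by
      rw [le_div_iff₀ h1]
      nlinarith
    linarith
  linarith

lemma abs_sq_ident (a b : ℂ) :
    Complex.abs (1 - (starRingEnd ℂ) a * b) ^ 2 - Complex.abs (a - b) ^ 2
      = (1 - Complex.abs a ^ 2) * (1 - Complex.abs b ^ 2) := by
  simp only [Complex.sq_abs]
  simp only [Complex.normSq_apply, Complex.sub_re, Complex.sub_im, Complex.mul_re,
    Complex.mul_im, Complex.one_re, Complex.one_im, Complex.conj_re, Complex.conj_im]
  ring

lemma abs_sub_lt_abs_one_sub {a b : ℂ} (ha : a ∈ ball (0:ℂ) 1) (hb : b ∈ ball (0:ℂ) 1) :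
    Complex.abs (a - b) < Complex.abs (1 - (starRingEnd ℂ) a * b) := by
  have ha' : Complex.abs a < 1 := by simpa [Complex.abs_apply] using mem_ball_zero_iff.mp ha
  have hb' : Complex.abs b < 1 := by simpa [Complex.abs_apply] using mem_ball_zero_iff.mp hb
  have h1 : Complex.abs (a - b) ^ 2 < Complex.abs (1 - (starRingEnd ℂ) a * b) ^ 2 := by
    have hid := abs_sq_ident a b
    have p1 : (0:ℝ) < 1 - Complex.abs a ^ 2 := by nlinarith [Complex.abs.nonneg a]
    have p2 : (0:ℝ) < 1 - Complex.abs b ^ 2 := by nlinarith [Complex.abs.nonneg b]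
    nlinarith [mul_pos p1 p2]
  exact lt_of_pow_lt_pow_left₀ 2 (Complex.abs.nonneg _) h1

lemma poincareDist_eq (a b : ℂ) :
    poincareDist a b
      = arctanh (Complex.abs (a - b) / Complex.abs (1 - (starRingEnd ℂ) a * b)) := by
  unfold poincareDist
  exact congrArg arctanh (norm_div _ _)

lemma poincareDist_nonneg (a b : ℂ) : 0 ≤ poincareDist a b :=
  arctanh_nonneg (norm_nonneg _)


/-- A holomorphic disc in `V`. -/
def Holo (E : Type*) [NormedAddCommGroup E] [NormedSpace ℂ E]
    {V : Type*} [TopologicalSpace V] [ChartedSpace E V] (f : ℂ → V) : Prop :=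
  MDifferentiableOn 𝓘(ℂ, ℂ) 𝓘(ℂ, E) f (ball (0:ℂ) 1)

section MetricOnly
variable {V : Type*} [MetricSpace V]

lemma lipschitz_chain {f : ℂ → V} {a : ℂ} {ρ R : ℝ} (hρ : 0 < ρ)
    (hloc : ∀ z ∈ closedBall a R, ∀ u ∈ ball z (ρ/8), ∀ v ∈ ball z (ρ/8),
      dist (f u) (f v) ≤ 4 * Complex.abs (u - v) / (ρ/2))
    {u v : ℂ} (hu : u ∈ closedBall a R) (hv : v ∈ closedBall a R) :
    dist (f u) (f v) ≤ 8 * Complex.abs (u - v) / ρ := by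
  rcases eq_or_ne u v with rfl | huv
  · simp only [dist_self, sub_self, map_zero]
    positivity
  have habuv : 0 < Complex.abs (u - v) := by
    simpa using sub_ne_zero.mpr huv
  set M : ℕ := max 1 ⌈Complex.abs (u - v) * 16 / ρ⌉₊ with hMdef
  have hM1 : 1 ≤ M := le_max_left _ _
  have hM0 : (0:ℝ) < (M:ℝ) := by exact_mod_cast hM1
  have hMge : Complex.abs (u - v) * 16 / ρ ≤ (M:ℝ) := by
    calc Complex.abs (u - v) * 16 / ρ ≤ (⌈Complex.abs (u - v) * 16 / ρ⌉₊ : ℝ) := Nat.le_ceil _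
      _ ≤ (M:ℝ) := by exact_mod_cast le_max_right _ _
  have hstep : Complex.abs (u - v) / M ≤ ρ / 16 := by
    rw [div_le_div_iff₀ hM0 (by norm_num : (0:ℝ) < 16)]
    rw [div_le_iff₀ hρ] at hMge
    linarith
  set P : ℕ → ℂ := fun i => u + (i : ℂ) / (M : ℂ) * (v - u) with hPdef
  have hPmem : ∀ i ≤ M, P i ∈ closedBall a R := by
    intro i hi
    have hs0 : (0:ℝ) ≤ (i:ℝ)/(M:ℝ) := by positivity
    have hs1 : (i:ℝ)/(M:ℝ) ≤ 1 := by
      rw [div_le_one hM0]; exact_mod_cast hi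
    have hdecomp : P i - a = (1 - (i:ℂ)/(M:ℂ)) * (u - a) + (i:ℂ)/(M:ℂ) * (v - a) := by
      rw [hPdef]; ring
    rw [mem_closedBall, dist_eq_norm, hdecomp]
    have hR : 0 ≤ R := le_trans dist_nonneg (mem_closedBall.mp hu)
    calc ‖(1 - (i:ℂ)/(M:ℂ)) * (u - a) + (i:ℂ)/(M:ℂ) * (v - a)‖
        ≤ ‖(1 - (i:ℂ)/(M:ℂ)) * (u - a)‖ + ‖(i:ℂ)/(M:ℂ) * (v - a)‖ := norm_add_le _ _
      _ = ‖(1 - (i:ℂ)/(M:ℂ))‖ * ‖u - a‖ + ‖(i:ℂ)/(M:ℂ)‖ * ‖v - a‖ := by rw [norm_mul, norm_mul]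
      _ ≤ (1 - (i:ℝ)/(M:ℝ)) * R + ((i:ℝ)/(M:ℝ)) * R := by
          have e1 : ‖(1 - (i:ℂ)/(M:ℂ))‖ = 1 - (i:ℝ)/(M:ℝ) := by
            rw [show (1 - (i:ℂ)/(M:ℂ)) = (((1 - (i:ℝ)/(M:ℝ) : ℝ)) : ℂ) by push_cast; ring]
            rw [Complex.norm_real, Real.norm_eq_abs, abs_of_nonneg (by linarith)]
          have e2 : ‖((i:ℂ)/(M:ℂ))‖ = (i:ℝ)/(M:ℝ) := by
            rw [show ((i:ℂ)/(M:ℂ)) = (((i:ℝ)/(M:ℝ) : ℝ) : ℂ) by push_cast; ring]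
            rw [Complex.norm_real, Real.norm_eq_abs, abs_of_nonneg hs0]
          rw [e1, e2]
          have h1 : ‖u - a‖ ≤ R := by rw [← dist_eq_norm]; exact mem_closedBall.mp hu
          have h2 : ‖v - a‖ ≤ R := by rw [← dist_eq_norm]; exact mem_closedBall.mp hv
          have : 0 ≤ 1 - (i:ℝ)/(M:ℝ) := by linarith
          nlinarith
      _ = R := by ring
  have hPstep : ∀ i : ℕ, Complex.abs (P (i+1) - P i) = Complex.abs (u - v) / M := by
    intro i
    have : P (i+1) - P i = (v - u) / (M:ℂ) := by
      rw [hPdef]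
      push_cast
      field_simp
      ring
    rw [this, map_div₀, Complex.abs.map_sub]
    congr 1
    show ‖((M:ℕ):ℂ)‖ = (M:ℝ)
    simp
  have hterm : ∀ i < M, dist (f (P i)) (f (P (i+1))) ≤ 8 * Complex.abs (u - v) / (M * ρ) := by
    intro i hi
    have h1 := hloc (P i) (hPmem i (le_of_lt hi)) (P i) (mem_ball_self (by positivity))
      (P (i+1)) (by
        rw [mem_ball, dist_eq_norm, ← Complex.norm_eq_abs] at *
        rw [show P (i+1) - P i = P (i+1) - P i from rfl] at *
        have := hPstep i
        rw [Complex.norm_eq_abs, this]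
        calc Complex.abs (u - v) / M ≤ ρ/16 := hstep
          _ < ρ/8 := by linarith)
    calc dist (f (P i)) (f (P (i+1))) ≤ 4 * Complex.abs (P i - P (i+1)) / (ρ/2) := h1
      _ = 8 * Complex.abs (u - v) / (M * ρ) := by
          have : Complex.abs (P i - P (i+1)) = Complex.abs (u - v) / M := by
            rw [Complex.abs.map_sub]
            exact hPstep i
          rw [this]
          field_simp
          ring
  have hP0 : P 0 = u := by rw [hPdef]; simp
  have hPM : P M = v := by
    rw [hPdef]
    have : ((M:ℂ)) ≠ 0 := by
      exact_mod_cast (by positivity : (M:ℝ) ≠ 0)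
    field_simp
    ring
  calc dist (f u) (f v) = dist (f (P 0)) (f (P M)) := by rw [hP0, hPM]
    _ ≤ ∑ i ∈ Finset.range M, dist (f (P i)) (f (P (i+1))) := dist_le_range_sum_dist (fun i => f (P i)) M
    _ ≤ ∑ _i ∈ Finset.range M, 8 * Complex.abs (u - v) / (M * ρ) := by
        apply Finset.sum_le_sum
        intro i hi
        exact hterm i (Finset.mem_range.mp hi)
    _ = M * (8 * Complex.abs (u - v) / (M * ρ)) := by
        rw [Finset.sum_const, Finset.card_range, nsmul_eq_mul]
    _ = 8 * Complex.abs (u - v) / ρ := by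
        field_simp

lemma selection {f : ℂ → V} (hcont : ContinuousOn f (ball (0:ℂ) 1)) {ε₁ t₀ : ℝ} {N : ℕ}
    (hε₁ : 0 < ε₁) (ht₀ : 0 < t₀) (hbudget : (3 * (N:ℝ) + 3) * t₀ ≤ 1/2)
    (h0 : ∃ w ∈ ball (0:ℂ) t₀, ε₁ < dist (f w) (f 0)) :
    ∃ a : ℂ, ∃ ρ : ℝ, 0 < ρ ∧ ρ ≤ t₀ ∧ Complex.abs a + (N:ℝ) * ρ + ρ ≤ 1/2 ∧
      (∃ w ∈ ball a ρ, ε₁ < dist (f w) (f a)) ∧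
      ∀ z ∈ closedBall a ((N:ℝ) * ρ), ∀ w ∈ ball z (ρ/2), dist (f w) (f z) ≤ ε₁ := by
  classical
  have hN0 : (0:ℝ) ≤ (N:ℝ) := Nat.cast_nonneg N
  set A : ℕ → Prop := fun k => ∃ z : ℂ,
    Complex.abs z ≤ 2*(N:ℝ)*t₀*(1 - (1/2:ℝ)^k) ∧
    ∃ w ∈ ball z (t₀ * (1/2:ℝ)^k), ε₁ < dist (f w) (f z) with hAdef
  have hA0 : A 0 := by
    refine ⟨0, by simp, ?_⟩
    simpa using h0
  -- uniform continuity on a compact set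
  set rK : ℝ := (2*(N:ℝ)+1)*t₀ with hrKdef
  have hrK1 : rK < 1 := by
    have : (2*(N:ℝ)+1)*t₀ ≤ (3*(N:ℝ)+3)*t₀ := by nlinarith
    linarith
  have hKsub : closedBall (0:ℂ) rK ⊆ ball (0:ℂ) 1 := closedBall_subset_ball hrK1
  have hucont : UniformContinuousOn f (closedBall (0:ℂ) rK) :=
    (isCompact_closedBall _ _).uniformContinuousOn_of_continuous (hcont.mono hKsub)
  obtain ⟨d, hd0, hd⟩ := (Metric.uniformContinuousOn_iff_le.mp hucont) (ε₁/2) (by linarith)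
  -- members of A are bounded
  have hAbd : ∀ k, A k → d ≤ t₀ * (1/2:ℝ)^k := by
    intro k ⟨z, hz, w, hw, hdist⟩
    by_contra hlt
    push_neg at hlt
    have hp : (0:ℝ) ≤ 2*(N:ℝ)*t₀*((1/2:ℝ)^k) := by positivity
    have hzK : z ∈ closedBall (0:ℂ) rK := by
      rw [mem_closedBall, dist_zero_right, Complex.norm_eq_abs]
      nlinarith
    have hwK : w ∈ closedBall (0:ℂ) rK := by
      rw [mem_closedBall, dist_zero_right, Complex.norm_eq_abs]
      have h1 : Complex.abs (w - z) < t₀ * (1/2:ℝ)^k := by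
        have := mem_ball_iff_norm.mp hw
        rwa [Complex.norm_eq_abs] at this
      have h2 : Complex.abs w ≤ Complex.abs z + Complex.abs (w - z) := by
        calc Complex.abs w = Complex.abs (z + (w - z)) := by ring_nf
          _ ≤ Complex.abs z + Complex.abs (w - z) := Complex.abs.add_le _ _
      have h3 : (0:ℝ) ≤ (1/2:ℝ)^k := by positivity
      have h4 : (1/2:ℝ)^k ≤ 1 := pow_le_one₀ (by norm_num) (by norm_num)
      have hq : t₀ * (1/2:ℝ)^k ≤ t₀ := by
        nlinarith [mul_nonneg ht₀.le (by linarith : (0:ℝ) ≤ 1 - (1/2:ℝ)^k)]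
      nlinarith
    have hcd : dist w z ≤ d := by
      rw [dist_eq_norm, Complex.norm_eq_abs]
      have h5 : Complex.abs (w - z) < t₀ * (1/2:ℝ)^k := by
        have := mem_ball_iff_norm.mp hw
        rwa [Complex.norm_eq_abs] at this
      linarith
    have : dist (f w) (f z) ≤ ε₁/2 := hd w hwK z hzK hcd
    linarith
  obtain ⟨n, hn⟩ := exists_pow_lt_of_lt_one (div_pos hd0 ht₀) (by norm_num : (1/2:ℝ) < 1)
  have hAlt : ∀ k, A k → k < n := by
    intro k hk
    by_contra hge
    push_neg at hge
    have h1 : (1/2:ℝ)^k ≤ (1/2:ℝ)^n := pow_le_pow_of_le_one (by norm_num) (by norm_num) hge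
    have h2 := hAbd k hk
    have h3 : t₀ * (1/2:ℝ)^k < d := by
      rw [lt_div_iff₀ ht₀] at hn
      nlinarith [mul_le_mul_of_nonneg_left h1 ht₀.le]
    linarith
  set k' : ℕ := Nat.findGreatest A n with hk'def
  have hk'A : A k' := Nat.findGreatest_spec (Nat.zero_le n) hA0
  have hk'not : ¬ A (k' + 1) := by
    rcases le_or_gt (k' + 1) n with h | h
    · exact Nat.findGreatest_is_greatest (Nat.lt_succ_self _) h
    · intro hA
      have := hAlt _ hA
      omega
  obtain ⟨a, ha, w₀, hw₀, hw₀d⟩ := hk'A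
  set ρ : ℝ := t₀ * (1/2:ℝ)^k' with hρdef
  have hρ0 : 0 < ρ := by positivity
  have hpow1 : (1/2:ℝ)^k' ≤ 1 := pow_le_one₀ (by norm_num) (by norm_num)
  have hpow0 : (0:ℝ) ≤ (1/2:ℝ)^k' := by positivity
  have hρt₀ : ρ ≤ t₀ := by nlinarith [mul_le_mul_of_nonneg_left hpow1 ht₀.le]
  refine ⟨a, ρ, hρ0, hρt₀, ?_, ⟨w₀, hw₀, hw₀d⟩, ?_⟩
  · have hNt₀p : (0:ℝ) ≤ (N:ℝ)*t₀*((1/2:ℝ)^k') := by positivity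
    nlinarith
  · intro z hz w hw
    by_contra hgt
    push_neg at hgt
    apply hk'not
    refine ⟨z, ?_, ⟨w, ?_, hgt⟩⟩
    · have h1 : Complex.abs (z - a) ≤ (N:ℝ) * ρ := by
        have := mem_closedBall.mp hz
        rwa [dist_eq_norm, Complex.norm_eq_abs] at this
      have h2 : Complex.abs z ≤ Complex.abs a + Complex.abs (z - a) := by
        calc Complex.abs z = Complex.abs (a + (z - a)) := by ring_nf
          _ ≤ Complex.abs a + Complex.abs (z - a) := Complex.abs.add_le _ _
      have h3 : (1/2:ℝ)^(k'+1) = (1/2:ℝ)^k' * (1/2) := pow_succ _ _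
      rw [h3]
      nlinarith
    · have h3 : t₀ * (1/2:ℝ)^(k'+1) = ρ/2 := by
        rw [pow_succ, hρdef]; ring
      rw [h3]
      exact hw

lemma tendstoUniformlyOn_of_lipschitz {ι : Type*} {𝒰 : Filter ι} {g : ι → ℂ → V} {G : ℂ → V}
    {K : Set ℂ} (hK : IsCompact K) {L : ℝ} (hL : 0 < L)
    (hptwise : ∀ ζ ∈ K, Tendsto (fun n => g n ζ) 𝒰 (𝓝 (G ζ)))
    (hlip : ∀ᶠ n in 𝒰, ∀ u ∈ K, ∀ v ∈ K, dist (g n u) (g n v) ≤ L * Complex.abs (u - v))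
    (hGlip : ∀ u ∈ K, ∀ v ∈ K, dist (G u) (G v) ≤ L * Complex.abs (u - v)) :
    TendstoUniformlyOn g G 𝒰 K := by
  rw [Metric.tendstoUniformlyOn_iff]
  intro ε hε
  set r := ε / (4 * L) with hrdef
  have hr0 : 0 < r := by positivity
  obtain ⟨T, hTmem, hTcov⟩ := hK.elim_nhds_subcover (fun q => ball q r)
    (fun q _ => ball_mem_nhds q hr0)
  have hev1 : ∀ᶠ n in 𝒰, ∀ q ∈ T, dist (G q) (g n q) < ε/3 := by
    rw [Filter.eventually_all_finset]
    intro q hq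
    have h1 := hptwise q (hTmem q hq)
    have h2 := (Metric.tendsto_nhds.mp h1) (ε/3) (by linarith)
    filter_upwards [h2] with n hn
    rw [dist_comm]
    exact hn
  filter_upwards [hev1, hlip] with n h1 h2
  intro x hx
  have hx' := hTcov hx
  rw [mem_iUnion₂] at hx'
  obtain ⟨q, hqT, hqx⟩ := hx'
  have hqK : q ∈ K := hTmem q hqT
  have hdxq : Complex.abs (x - q) < r := by
    rw [← Complex.dist_eq_abs]
    exact mem_ball.mp hqx
  have habs : Complex.abs (q - x) = Complex.abs (x - q) := Complex.abs.map_sub q x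
  calc dist (G x) (g n x)
      ≤ dist (G x) (G q) + dist (G q) (g n q) + dist (g n q) (g n x) := dist_triangle4 _ _ _ _
    _ ≤ L * Complex.abs (x - q) + dist (G q) (g n q) + L * Complex.abs (q - x) := by
        have e1 := hGlip x hx q hqK
        have e2 := h2 q hqK x hx
        linarith
    _ < L * r + ε/3 + L * r := by
        have := h1 q hqT
        have e3 : L * Complex.abs (x - q) ≤ L * r := by nlinarith
        have e4 : L * Complex.abs (q - x) ≤ L * r := by rw [habs]; nlinarith
        -- strictness from middle term
        have e5 : L * Complex.abs (x - q) < L * r := by nlinarith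
        have e6 : L * Complex.abs (q - x) < L * r := by rw [habs]; nlinarith
        linarith
    _ ≤ ε/4 + ε/3 + ε/4 := by
        have : L * r = ε/4 := by rw [hrdef]; field_simp
        linarith
    _ < ε := by linarith


end MetricOnly

variable {E : Type*} [NormedAddCommGroup E] [NormedSpace ℂ E] [FiniteDimensional ℂ E]
variable {V : Type*} [MetricSpace V] [ChartedSpace E V] [IsManifold 𝓘(ℂ, E) (⊤ : WithTop ℕ∞) V]

lemma kobayashiDistOn_le_single {U : Set V} {h : ℂ → V} (hh : Holo E h)
    (him : h '' ball (0:ℂ) 1 ⊆ U) {α β : ℂ}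
    (hα : α ∈ ball (0:ℂ) 1) (hβ : β ∈ ball (0:ℂ) 1) :
    kobayashiDistOn E U (h α) (h β) ≤ ENNReal.ofReal (poincareDist α β) := by
  unfold kobayashiDistOn
  refine iInf_le_of_le 0 ?_
  refine iInf_le_of_le (fun _ => h) ?_
  refine iInf_le_of_le (fun _ => (α, β)) ?_
  refine iInf_le_of_le (fun _ => hh) ?_
  refine iInf_le_of_le (fun _ => him) ?_
  refine iInf_le_of_le (fun _ => ⟨hα, hβ⟩) ?_
  refine iInf_le_of_le rfl ?_
  refine iInf_le_of_le rfl ?_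
  refine iInf_le_of_le (fun j => j.elim0) ?_
  simp

lemma holo_comp_affine {f : ℂ → V} (hf : Holo E f) {z c : ℂ}
    (h : ∀ w : ℂ, w ∈ ball (0:ℂ) 1 → z + c * w ∈ ball (0:ℂ) 1) :
    Holo E (fun w => f (z + c * w)) := by
  have hi : MDifferentiableOn 𝓘(ℂ, ℂ) 𝓘(ℂ, ℂ) (fun w : ℂ => z + c * w) (ball (0:ℂ) 1) := by
    apply mdifferentiableOn_iff_differentiableOn.mpr
    exact ((differentiable_const z).add ((differentiable_id).const_mul c)).differentiableOn
  exact MDifferentiableOn.comp hf hi h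


section Admissible
variable {Ufam : V → Set V} {ε₀ ε₁ : ℝ}

lemma dist_le_poincareDist
    (hadm : ∀ x : V, ∀ p q : V, p ∈ Ufam x → q ∈ Ufam x →
      ENNReal.ofReal (dist p q) ≤ kobayashiDistOn E (Ufam x) p q)
    {h : ℂ → V} (hh : Holo E h) {x : V} (him : h '' ball (0:ℂ) 1 ⊆ Ufam x)
    {α β : ℂ} (hα : α ∈ ball (0:ℂ) 1) (hβ : β ∈ ball (0:ℂ) 1) :
    dist (h α) (h β) ≤ poincareDist α β := by
  have h1 := hadm x (h α) (h β) (him ⟨α, hα, rfl⟩) (him ⟨β, hβ, rfl⟩)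
  have h2 := kobayashiDistOn_le_single hh him hα hβ
  have h3 := le_trans h1 h2
  rwa [ENNReal.ofReal_le_ofReal_iff (poincareDist_nonneg α β)] at h3

lemma lipschitz_of_small_osc
    (hadm : ∀ x : V, ∀ p q : V, p ∈ Ufam x → q ∈ Ufam x →
      ENNReal.ofReal (dist p q) ≤ kobayashiDistOn E (Ufam x) p q)
    (hLeb : ∀ y : V, ∃ x, ball y ε₀ ⊆ Ufam x)
    {f : ℂ → V} (hf : Holo E f) {z : ℂ} {t : ℝ} (ht : 0 < t)
    (hsub : ball z t ⊆ ball (0:ℂ) 1)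
    (hosc : ∀ w ∈ ball z t, dist (f w) (f z) < ε₀)
    {u v : ℂ} (hu : u ∈ ball z (t/4)) (hv : v ∈ ball z (t/4)) :
    dist (f u) (f v) ≤ 4 * Complex.abs (u - v) / t := by
  obtain ⟨x, hx⟩ := hLeb (f z)
  have ht' : (t:ℂ) ≠ 0 := by exact_mod_cast ht.ne'
  set g : ℂ → V := fun w => f (z + (t:ℂ) * w) with hgdef
  have hmem : ∀ w : ℂ, w ∈ ball (0:ℂ) 1 → z + (t:ℂ) * w ∈ ball z t := by
    intro w hw
    rw [mem_ball, dist_eq_norm]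
    rw [mem_ball_zero_iff] at hw
    calc ‖z + (t:ℂ) * w - z‖ = ‖(t:ℂ)‖ * ‖w‖ := by rw [show z + (t:ℂ)*w - z = (t:ℂ)*w by ring, norm_mul]
      _ < ‖(t:ℂ)‖ * 1 := by
          apply mul_lt_mul_of_pos_left hw
          rw [Complex.norm_real]
          exact abs_pos.mpr ht.ne'
      _ = t := by simp [Complex.norm_real, abs_of_pos ht]
  have hg : Holo E g := holo_comp_affine hf (fun w hw => hsub (hmem w hw))
  have him : g '' ball (0:ℂ) 1 ⊆ Ufam x := by
    rintro _ ⟨w, hw, rfl⟩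
    exact hx (mem_ball.mpr (hosc _ (hmem w hw)))
  set α : ℂ := (u - z) / t with hαdef
  set β : ℂ := (v - z) / t with hβdef
  have hu' : Complex.abs (u - z) < t/4 := by
    have := mem_ball_iff_norm.mp hu
    rwa [Complex.norm_eq_abs] at this
  have hv' : Complex.abs (v - z) < t/4 := by
    have := mem_ball_iff_norm.mp hv
    rwa [Complex.norm_eq_abs] at this
  have habsα : Complex.abs α < 1/4 := by
    rw [hαdef, map_div₀, Complex.abs_ofReal, abs_of_pos ht, div_lt_iff₀ ht]
    linarith
  have habsβ : Complex.abs β < 1/4 := by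
    rw [hβdef, map_div₀, Complex.abs_ofReal, abs_of_pos ht, div_lt_iff₀ ht]
    linarith
  have hα : α ∈ ball (0:ℂ) 1 := by
    rw [mem_ball_zero_iff, Complex.norm_eq_abs]; linarith
  have hβ : β ∈ ball (0:ℂ) 1 := by
    rw [mem_ball_zero_iff, Complex.norm_eq_abs]; linarith
  have hgu : g α = f u := by
    show f (z + (t:ℂ) * α) = f u
    rw [hαdef]
    congr 1
    field_simp
    ring
  have hgv : g β = f v := by
    show f (z + (t:ℂ) * β) = f v
    rw [hβdef]
    congr 1
    field_simp
    ring
  have hd : dist (f u) (f v) ≤ poincareDist α β := by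
    rw [← hgu, ← hgv]
    exact dist_le_poincareDist hadm hg him hα hβ
  have habαβ : Complex.abs (α - β) = Complex.abs (u - v) / t := by
    have : α - β = (u - v) / (t:ℂ) := by rw [hαdef, hβdef]; ring
    rw [this, map_div₀]
    simp [Complex.abs_ofReal, abs_of_pos ht]
  have hden : (15:ℝ)/16 ≤ Complex.abs (1 - (starRingEnd ℂ) α * β) := by
    have h1 : Complex.abs ((starRingEnd ℂ) α * β) ≤ 1/16 := by
      rw [map_mul]
      have hca : Complex.abs ((starRingEnd ℂ) α) = Complex.abs α := Complex.abs_conj α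
      rw [hca]
      nlinarith [Complex.abs.nonneg α, Complex.abs.nonneg β]
    have h2 := norm_sub_norm_le (1 : ℂ) ((starRingEnd ℂ) α * β)
    simp only [norm_one, Complex.norm_eq_abs] at h2
    linarith
  have habs_sum : Complex.abs (α - β) ≤ 1/2 := by
    calc Complex.abs (α - β) ≤ Complex.abs α + Complex.abs β := by
          simpa using Complex.abs.sub_le_add α β
      _ ≤ 1/2 := by linarith
  have hratio : Complex.abs (α - β) / Complex.abs (1 - (starRingEnd ℂ) α * β)
      ≤ (16/15) * Complex.abs (α - β) := by
    rw [div_le_iff₀ (by linarith : (0:ℝ) < Complex.abs (1 - (starRingEnd ℂ) α * β))]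
    nlinarith [Complex.abs.nonneg (α - β)]
  have hratio34 : Complex.abs (α - β) / Complex.abs (1 - (starRingEnd ℂ) α * β) ≤ 3/4 := by
    calc _ ≤ (16/15) * Complex.abs (α - β) := hratio
      _ ≤ 3/4 := by linarith
  have hp : poincareDist α β ≤ 4 * Complex.abs (α - β) := by
    rw [poincareDist_eq]
    calc arctanh (Complex.abs (α - β) / Complex.abs (1 - (starRingEnd ℂ) α * β))
        ≤ 3 * (Complex.abs (α - β) / Complex.abs (1 - (starRingEnd ℂ) α * β)) :=
          arctanh_le_three_mul (by positivity) hratio34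
      _ ≤ 3 * ((16/15) * Complex.abs (α - β)) := by linarith
      _ ≤ 4 * Complex.abs (α - β) := by nlinarith [Complex.abs.nonneg (α - β)]
  calc dist (f u) (f v) ≤ poincareDist α β := hd
    _ ≤ 4 * Complex.abs (α - β) := hp
    _ = 4 * Complex.abs (u - v) / t := by rw [habαβ]; ring

lemma mdifferentiableAt_of_unif [CompactSpace V] {ι : Type*} {𝒰 : Filter ι} [𝒰.NeBot]
    {g : ι → ℂ → V} {G : ℂ → V} {ζ₀ : ℂ} {r : ℝ} (hr : 0 < r)
    (hg : ∀ᶠ n in 𝒰, MDifferentiableOn 𝓘(ℂ, ℂ) 𝓘(ℂ, E) (g n) (ball ζ₀ (2*r)))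
    (hconv : TendstoUniformlyOn g G 𝒰 (closedBall ζ₀ r))
    (hGcont : ContinuousOn G (closedBall ζ₀ r)) :
    MDifferentiableAt 𝓘(ℂ, ℂ) 𝓘(ℂ, E) G ζ₀ := by
  set x₀ := G ζ₀ with hx₀def
  set c := chartAt E x₀ with hcdef
  have hx₀ : x₀ ∈ c.source := mem_chart_source E x₀
  obtain ⟨σ₃, hσ₃0, hσ₃⟩ := Metric.isOpen_iff.mp c.open_source x₀ hx₀
  set σ := σ₃/4 with hσdef
  have hσ0 : 0 < σ := by positivity
  have hsub_src : closedBall x₀ (3*σ) ⊆ c.source := by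
    intro y hy
    apply hσ₃
    rw [mem_ball]
    have h := mem_closedBall.mp hy
    rw [hσdef] at h
    linarith
  -- radius r'
  have hcontζ₀ : ContinuousAt G ζ₀ := hGcont.continuousAt (closedBall_mem_nhds ζ₀ hr)
  obtain ⟨δ₁, hδ₁0, hδ₁⟩ := Metric.continuousAt_iff.mp hcontζ₀ σ hσ0
  set r' := min (δ₁/2) r with hr'def
  have hr'0 : 0 < r' := by positivity
  have hr'r : r' ≤ r := min_le_right _ _
  have hGσ : ∀ ζ ∈ closedBall ζ₀ r', dist (G ζ) x₀ ≤ σ := by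
    intro ζ hζ
    have h1 : dist ζ ζ₀ < δ₁ := by
      have := mem_closedBall.mp hζ
      have : dist ζ ζ₀ ≤ δ₁/2 := le_trans this (min_le_left _ _)
      linarith
    exact (hδ₁ h1).le
  -- uniform continuity of the chart
  have hKc : IsCompact (closedBall x₀ (3*σ)) := IsClosed.isCompact isClosed_closedBall
  have hUC : UniformContinuousOn c (closedBall x₀ (3*σ)) :=
    hKc.uniformContinuousOn_of_continuous (c.continuousOn.mono hsub_src)
  -- uniform convergence of charted maps
  have hconv' : TendstoUniformlyOn (fun n ζ => c (g n ζ)) (fun ζ => c (G ζ)) 𝒰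
      (closedBall ζ₀ r') := by
    rw [Metric.tendstoUniformlyOn_iff]
    intro ε hε
    obtain ⟨δ, hδ0, hδ⟩ := Metric.uniformContinuousOn_iff_le.mp hUC (ε/2) (by linarith)
    filter_upwards [Metric.tendstoUniformlyOn_iff.mp hconv (min δ σ) (by positivity)] with n hn
    intro ζ hζ
    have hζr : ζ ∈ closedBall ζ₀ r := closedBall_subset_closedBall hr'r hζ
    have h1 : dist (G ζ) (g n ζ) < min δ σ := hn ζ hζr
    have hGζ : G ζ ∈ closedBall x₀ (3*σ) := by
      rw [mem_closedBall]
      have := hGσ ζ hζ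
      linarith
    have hgζ : g n ζ ∈ closedBall x₀ (3*σ) := by
      rw [mem_closedBall]
      have h2 : dist (g n ζ) x₀ ≤ dist (g n ζ) (G ζ) + dist (G ζ) x₀ := dist_triangle _ _ _
      have h3 : dist (g n ζ) (G ζ) < σ := by rw [dist_comm]; exact lt_of_lt_of_le h1 (min_le_right _ _)
      have := hGσ ζ hζ
      linarith
    have h4 : dist (c (G ζ)) (c (g n ζ)) ≤ ε/2 :=
      hδ _ hGζ _ hgζ (le_of_lt (lt_of_lt_of_le h1 (min_le_left _ _)))
    linarith
  -- differentiability of charted maps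
  have hFdiff : ∀ᶠ n in 𝒰, DifferentiableOn ℂ (fun ζ => c (g n ζ)) (ball ζ₀ r') := by
    filter_upwards [hg, Metric.tendstoUniformlyOn_iff.mp hconv σ hσ0] with n hgn hn
    intro ζ hζ
    have hζ2r : ζ ∈ ball ζ₀ (2*r) := by
      rw [mem_ball] at *
      have : dist ζ ζ₀ < r' := hζ
      linarith [hr'r, hr]
    have h2 : MDifferentiableAt 𝓘(ℂ, ℂ) 𝓘(ℂ, E) (g n) ζ :=
      hgn.mdifferentiableAt (isOpen_ball.mem_nhds hζ2r)
    have hζcb : ζ ∈ closedBall ζ₀ r' := ball_subset_closedBall hζ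
    have hgζsrc : g n ζ ∈ c.source := by
      apply hsub_src
      rw [mem_closedBall]
      have h3 : dist (G ζ) (g n ζ) < σ := hn ζ (closedBall_subset_closedBall hr'r hζcb)
      have h4 := hGσ ζ hζcb
      have h5 : dist (g n ζ) x₀ ≤ dist (g n ζ) (G ζ) + dist (G ζ) x₀ := dist_triangle _ _ _
      rw [dist_comm (g n ζ) (G ζ)] at h5
      linarith
    have h3 : MDifferentiableAt 𝓘(ℂ, E) 𝓘(ℂ, E) c (g n ζ) :=
      mdifferentiableAt_atlas (chart_mem_atlas E x₀) hgζsrc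
    have h6 : MDifferentiableAt 𝓘(ℂ, ℂ) 𝓘(ℂ, E) (c ∘ g n) ζ := h3.comp ζ h2
    exact (mdifferentiableAt_iff_differentiableAt.mp h6).differentiableWithinAt
  -- the limit is holomorphic in the chart
  have hlim : DifferentiableOn ℂ (fun ζ => c (G ζ)) (ball ζ₀ r') :=
    (hconv'.tendstoLocallyUniformlyOn.mono ball_subset_closedBall).differentiableOn
      hFdiff isOpen_ball
  -- reconstruct G
  have hGsrc : ∀ ζ ∈ ball ζ₀ r', G ζ ∈ c.source := by
    intro ζ hζ
    apply hsub_src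
    rw [mem_closedBall]
    have := hGσ ζ (ball_subset_closedBall hζ)
    linarith
  have h4 : MDifferentiableAt 𝓘(ℂ, E) 𝓘(ℂ, E) c.symm (c x₀) :=
    mdifferentiableAt_atlas_symm (chart_mem_atlas E x₀) (c.map_source hx₀)
  have h5 : DifferentiableAt ℂ (fun ζ => c (G ζ)) ζ₀ :=
    (hlim ζ₀ (mem_ball_self hr'0)).differentiableAt (isOpen_ball.mem_nhds (mem_ball_self hr'0))
  have h6 : MDifferentiableAt 𝓘(ℂ, ℂ) 𝓘(ℂ, E) (c.symm ∘ (fun ζ => c (G ζ))) ζ₀ :=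
    MDifferentiableAt.comp ζ₀ h4 h5.mdifferentiableAt
  have hEq : G =ᶠ[𝓝 ζ₀] (c.symm ∘ (fun ζ => c (G ζ))) := by
    filter_upwards [isOpen_ball.mem_nhds (mem_ball_self hr'0)] with ζ hζ
    exact (c.left_inv (hGsrc ζ hζ)).symm
  exact h6.congr_of_eventuallyEq hEq

lemma exists_rescaled
    (hadm : ∀ x : V, ∀ p q : V, p ∈ Ufam x → q ∈ Ufam x →
      ENNReal.ofReal (dist p q) ≤ kobayashiDistOn E (Ufam x) p q)
    (hLeb : ∀ y : V, ∃ x, ball y ε₀ ⊆ Ufam x)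
    (hε₁0 : 0 < ε₁) (hε₁ : 2 * ε₁ ≤ ε₀)
    (hbad : ∀ η : ℝ, 0 < η → ∃ f : ℂ → V, Holo E f ∧
      ∃ w ∈ ball (0:ℂ) η, ε₁ < dist (f w) (f 0))
    (n : ℕ) :
    ∃ g : ℂ → V, MDifferentiableOn 𝓘(ℂ, ℂ) 𝓘(ℂ, E) g (ball (0:ℂ) ((n:ℝ)+1)) ∧
      (∃ w ∈ closedBall (0:ℂ) 1, ε₁ ≤ dist (g w) (g 0)) ∧
      ∀ u ∈ closedBall (0:ℂ) ((n:ℝ)+1), ∀ v ∈ closedBall (0:ℂ) ((n:ℝ)+1),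
        dist (g u) (g v) ≤ 8 * Complex.abs (u - v) := by
  set N : ℕ := n + 2 with hNdef
  set t₀ : ℝ := 1 / (6 * ((N:ℝ) + 1)) with ht₀def
  have hN0 : (0:ℝ) < (N:ℝ) + 1 := by positivity
  have ht₀ : 0 < t₀ := by positivity
  have hbudget : (3 * (N:ℝ) + 3) * t₀ ≤ 1/2 := by
    rw [ht₀def]
    rw [mul_one_div, div_le_div_iff₀ (by positivity) (by norm_num)]
    ring_nf
    nlinarith [(Nat.cast_nonneg N : (0:ℝ) ≤ (N:ℝ))]
  obtain ⟨f, hf, w₁, hw₁, hw₁d⟩ := hbad t₀ ht₀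
  have hcont : ContinuousOn f (ball (0:ℂ) 1) := hf.continuousOn
  obtain ⟨a, ρ, hρ0, hρt₀, hbound, ⟨w₀, hw₀, hw₀d⟩, hstop⟩ :=
    selection hcont hε₁0 ht₀ hbudget ⟨w₁, hw₁, hw₁d⟩
  have hNρ : (0:ℝ) ≤ (N:ℝ) * ρ := by positivity
  -- the local Lipschitz estimates
  have hloc : ∀ z ∈ closedBall a ((N:ℝ) * ρ), ∀ u ∈ ball z (ρ/8), ∀ v ∈ ball z (ρ/8),
      dist (f u) (f v) ≤ 4 * Complex.abs (u - v) / (ρ/2) := by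
    intro z hz u hu v hv
    have hzabs : Complex.abs (z - a) ≤ (N:ℝ) * ρ := by
      have := mem_closedBall.mp hz
      rwa [dist_eq_norm, Complex.norm_eq_abs] at this
    have hzball : ball z (ρ/2) ⊆ ball (0:ℂ) 1 := by
      intro y hy
      rw [mem_ball_zero_iff, Complex.norm_eq_abs]
      have h1 : Complex.abs (y - z) < ρ/2 := by
        have := mem_ball_iff_norm.mp hy
        rwa [Complex.norm_eq_abs] at this
      have h2 : Complex.abs y ≤ Complex.abs a + Complex.abs (z - a) + Complex.abs (y - z) := by
        calc Complex.abs y = Complex.abs (a + (z - a) + (y - z)) := by ring_nf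
          _ ≤ _ := by
              refine le_trans (Complex.abs.add_le _ _) ?_
              exact add_le_add_left (Complex.abs.add_le _ _) _
      linarith
    have hosc : ∀ w ∈ ball z (ρ/2), dist (f w) (f z) < ε₀ := by
      intro w hw
      have := hstop z hz w hw
      linarith
    exact lipschitz_of_small_osc hadm hLeb hf (by positivity) hzball hosc
      (by simpa [show (ρ/2)/4 = ρ/8 by ring] using hu)
      (by simpa [show (ρ/2)/4 = ρ/8 by ring] using hv)
  have hlip : ∀ u ∈ closedBall a ((N:ℝ)*ρ), ∀ v ∈ closedBall a ((N:ℝ)*ρ),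
      dist (f u) (f v) ≤ 8 * Complex.abs (u - v) / ρ :=
    fun u hu v hv => lipschitz_chain hρ0 hloc hu hv
  -- rescale
  set g : ℂ → V := fun ζ => f (a + (ρ:ℂ) * ζ) with hgdef
  have hρC : Complex.abs ((ρ:ℝ):ℂ) = ρ := by
    rw [Complex.abs_ofReal, abs_of_pos hρ0]
  have hmapsto : ∀ ζ : ℂ, Complex.abs ζ ≤ (n:ℝ) + 1 → a + (ρ:ℂ)*ζ ∈ closedBall a ((N:ℝ)*ρ) := by
    intro ζ hζ
    rw [mem_closedBall, dist_eq_norm, Complex.norm_eq_abs]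
    have h1 : Complex.abs (a + (ρ:ℂ)*ζ - a) = ρ * Complex.abs ζ := by
      rw [show a + (ρ:ℂ)*ζ - a = (ρ:ℂ)*ζ by ring, map_mul, hρC]
    rw [h1]
    have hn1 : (n:ℝ) + 1 ≤ (N:ℝ) := by
      rw [hNdef]; push_cast; linarith
    nlinarith
  have hmapsto' : ∀ ζ : ℂ, Complex.abs ζ < (n:ℝ) + 1 → a + (ρ:ℂ)*ζ ∈ ball (0:ℂ) 1 := by
    intro ζ hζ
    rw [mem_ball_zero_iff, Complex.norm_eq_abs]
    have h1 : Complex.abs (a + (ρ:ℂ)*ζ) ≤ Complex.abs a + ρ * Complex.abs ζ := by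
      calc Complex.abs (a + (ρ:ℂ)*ζ) ≤ Complex.abs a + Complex.abs ((ρ:ℂ)*ζ) :=
            Complex.abs.add_le _ _
        _ = Complex.abs a + ρ * Complex.abs ζ := by rw [map_mul, hρC]
    have hn1 : (n:ℝ) + 1 ≤ (N:ℝ) := by rw [hNdef]; push_cast; linarith
    have h2 : ρ * Complex.abs ζ < (N:ℝ)*ρ + ρ := by nlinarith [Complex.abs.nonneg ζ]
    linarith
  refine ⟨g, ?_, ?_, ?_⟩
  · -- holomorphy
    have hi : MDifferentiableOn 𝓘(ℂ, ℂ) 𝓘(ℂ, ℂ) (fun ζ : ℂ => a + (ρ:ℂ) * ζ)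
        (ball (0:ℂ) ((n:ℝ)+1)) := by
      apply mdifferentiableOn_iff_differentiableOn.mpr
      exact ((differentiable_const a).add ((differentiable_id).const_mul _)).differentiableOn
    apply MDifferentiableOn.comp hf hi
    intro ζ hζ
    have : Complex.abs ζ < (n:ℝ)+1 := by
      have := mem_ball_zero_iff.mp hζ
      rwa [Complex.norm_eq_abs] at this
    exact hmapsto' ζ this
  · -- the witness
    refine ⟨(w₀ - a)/(ρ:ℂ), ?_, ?_⟩
    · rw [mem_closedBall, dist_zero_right, Complex.norm_eq_abs, map_div₀, hρC]
      rw [div_le_one hρ0]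
      have := mem_ball_iff_norm.mp hw₀
      rw [Complex.norm_eq_abs] at this
      linarith
    · have hρne : ((ρ:ℝ):ℂ) ≠ 0 := by
        exact_mod_cast hρ0.ne'
      have h1 : g ((w₀ - a)/(ρ:ℂ)) = f w₀ := by
        show f (a + (ρ:ℂ) * ((w₀ - a)/(ρ:ℂ))) = f w₀
        congr 1
        field_simp
        ring
      have h2 : g 0 = f a := by
        show f (a + (ρ:ℂ) * 0) = f a
        congr 1
        ring
      rw [h1, h2]
      exact hw₀d.le
  · -- Lipschitz
    intro u hu v hv
    have hu' := hmapsto u (by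
      have := mem_closedBall.mp hu
      rwa [dist_zero_right, Complex.norm_eq_abs] at this)
    have hv' := hmapsto v (by
      have := mem_closedBall.mp hv
      rwa [dist_zero_right, Complex.norm_eq_abs] at this)
    have h1 := hlip _ hu' _ hv'
    have h2 : Complex.abs (a + (ρ:ℂ)*u - (a + (ρ:ℂ)*v)) = ρ * Complex.abs (u - v) := by
      rw [show a + (ρ:ℂ)*u - (a + (ρ:ℂ)*v) = (ρ:ℂ)*(u - v) by ring, map_mul, hρC]
    calc dist (g u) (g v) ≤ 8 * Complex.abs (a + (ρ:ℂ)*u - (a + (ρ:ℂ)*v)) / ρ := h1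
      _ = 8 * Complex.abs (u - v) := by rw [h2]; field_simp

lemma claimA [CompactSpace V]
    (hadm : ∀ x : V, ∀ p q : V, p ∈ Ufam x → q ∈ Ufam x →
      ENNReal.ofReal (dist p q) ≤ kobayashiDistOn E (Ufam x) p q)
    (hLeb : ∀ y : V, ∃ x, ball y ε₀ ⊆ Ufam x)
    (hBrody : ∀ g : ℂ → V, MDifferentiable 𝓘(ℂ, ℂ) 𝓘(ℂ, E) g → ∀ x y : ℂ, g x = g y)
    (hε₁0 : 0 < ε₁) (hε₁ : 2 * ε₁ ≤ ε₀) :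
    ∃ η : ℝ, 0 < η ∧ η < 1 ∧ ∀ f : ℂ → V, Holo E f →
      ∀ w ∈ ball (0:ℂ) η, dist (f w) (f 0) ≤ ε₁ := by
  by_contra hcon
  push_neg at hcon
  have hbad : ∀ η : ℝ, 0 < η → ∃ f : ℂ → V, Holo E f ∧
      ∃ w ∈ ball (0:ℂ) η, ε₁ < dist (f w) (f 0) := by
    intro η hη
    obtain ⟨f, hf, w, hw, hd⟩ := hcon (min η (1/2)) (by positivity)
      (lt_of_le_of_lt (min_le_right _ _) (by norm_num))
    exact ⟨f, hf, w, ball_subset_ball (min_le_left _ _) hw, hd⟩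
  have hres := fun n : ℕ => exists_rescaled hadm hLeb hε₁0 hε₁ hbad n
  choose g hgdiff hgwit hglip using hres
  choose w hwmem hwd using hgwit
  set 𝒰 : Ultrafilter ℕ := Ultrafilter.of atTop with h𝒰def
  have h𝒰le : (𝒰 : Filter ℕ) ≤ atTop := Ultrafilter.of_le _
  have hGex : ∀ ζ : ℂ, ∃ x : V, Tendsto (fun n => g n ζ) (𝒰 : Filter ℕ) (𝓝 x) := by
    intro ζ
    obtain ⟨x, -, hx⟩ := isCompact_univ.ultrafilter_le_nhds (𝒰.map (fun n => g n ζ))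
      (by simp [le_principal_iff])
    refine ⟨x, ?_⟩
    rw [Tendsto, ← Ultrafilter.coe_map]
    exact hx
  choose G hG using hGex
  have hlipm : ∀ m : ℕ, ∀ᶠ n in (𝒰 : Filter ℕ), ∀ u ∈ closedBall (0:ℂ) ((m:ℝ)+1),
      ∀ v ∈ closedBall (0:ℂ) ((m:ℝ)+1), dist (g n u) (g n v) ≤ 8 * Complex.abs (u - v) := by
    intro m
    apply h𝒰le
    filter_upwards [eventually_ge_atTop m] with n hn
    intro u hu v hv
    have hsub : closedBall (0:ℂ) ((m:ℝ)+1) ⊆ closedBall (0:ℂ) ((n:ℝ)+1) := by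
      apply closedBall_subset_closedBall
      have := (Nat.cast_le (α := ℝ)).mpr hn
      linarith
    exact hglip n u (hsub hu) v (hsub hv)
  have hGlip : ∀ m : ℕ, ∀ u ∈ closedBall (0:ℂ) ((m:ℝ)+1), ∀ v ∈ closedBall (0:ℂ) ((m:ℝ)+1),
      dist (G u) (G v) ≤ 8 * Complex.abs (u - v) := by
    intro m u hu v hv
    have h1 : Tendsto (fun n => dist (g n u) (g n v)) (𝒰 : Filter ℕ)
        (𝓝 (dist (G u) (G v))) := (hG u).dist (hG v)
    exact le_of_tendsto h1 ((hlipm m).mono (fun n hn => hn u hu v hv))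
  have hconv : ∀ m : ℕ, TendstoUniformlyOn g G (𝒰 : Filter ℕ)
      (closedBall (0:ℂ) ((m:ℝ)+1)) :=
    fun m => tendstoUniformlyOn_of_lipschitz (isCompact_closedBall _ _)
      (by norm_num : (0:ℝ) < 8) (fun ζ _ => hG ζ) (hlipm m) (hGlip m)
  have hGcont : ∀ m : ℕ, ContinuousOn G (closedBall (0:ℂ) ((m:ℝ)+1)) := by
    intro m ζ hζ
    rw [Metric.continuousWithinAt_iff]
    intro ε hε
    refine ⟨ε/9, by positivity, ?_⟩
    intro x hx hxζ
    have h1 : dist (G x) (G ζ) ≤ 8 * Complex.abs (x - ζ) := hGlip m x hx ζ hζ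
    rw [← Complex.dist_eq_abs] at h1
    linarith
  have hGdiff : MDifferentiable 𝓘(ℂ, ℂ) 𝓘(ℂ, E) G := by
    intro ζ₀
    set m : ℕ := ⌈Complex.abs ζ₀⌉₊ + 2 with hmdef
    have hm : Complex.abs ζ₀ + 2 ≤ (m:ℝ) := by
      rw [hmdef]; push_cast; linarith [Nat.le_ceil (Complex.abs ζ₀)]
    have hsubcb : closedBall ζ₀ 1 ⊆ closedBall (0:ℂ) ((m:ℝ)+1) := by
      intro y hy
      rw [mem_closedBall]
      have h1 : dist y ζ₀ ≤ 1 := mem_closedBall.mp hy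
      have h2 : dist ζ₀ 0 = Complex.abs ζ₀ := by
        rw [dist_zero_right, Complex.norm_eq_abs]
      calc dist y 0 ≤ dist y ζ₀ + dist ζ₀ 0 := dist_triangle _ _ _
        _ ≤ 1 + Complex.abs ζ₀ := by rw [h2]; linarith
        _ ≤ (m:ℝ)+1 := by linarith
    apply mdifferentiableAt_of_unif (𝒰 := (𝒰 : Filter ℕ)) (r := 1) one_pos
    · apply h𝒰le
      filter_upwards [eventually_ge_atTop m] with n hn
      have hsub : ball ζ₀ (2*1) ⊆ ball (0:ℂ) ((n:ℝ)+1) := by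
        intro y hy
        rw [mem_ball_zero_iff, Complex.norm_eq_abs]
        have h1 : dist y ζ₀ < 2 := by simpa using mem_ball.mp hy
        have h2 : Complex.abs y ≤ Complex.abs ζ₀ + Complex.abs (y - ζ₀) := by
          calc Complex.abs y = Complex.abs (ζ₀ + (y - ζ₀)) := by ring_nf
            _ ≤ _ := Complex.abs.add_le _ _
        have h3 : (m:ℝ) ≤ (n:ℝ) := Nat.cast_le.mpr hn
        rw [Complex.dist_eq_abs] at h1
        linarith
      exact (hgdiff n).mono hsub
    · exact (hconv m).mono hsubcb
    · exact (hGcont m).mono hsubcb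
  -- the limit of witnesses
  obtain ⟨wstar, hwstar_mem, hwstar⟩ := (isCompact_closedBall (0:ℂ) 1).ultrafilter_le_nhds
    (𝒰.map w) (by
      rw [Ultrafilter.coe_map, le_principal_iff]
      exact Filter.mem_map.mpr (Filter.univ_mem' hwmem))
  have hwtend : Tendsto w (𝒰 : Filter ℕ) (𝓝 wstar) := by
    rw [Tendsto, ← Ultrafilter.coe_map]
    exact hwstar
  have hcb2 : closedBall (0:ℂ) 1 ⊆ closedBall (0:ℂ) (((1:ℕ):ℝ)+1) :=
    closedBall_subset_closedBall (by norm_num)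
  have hE : Tendsto (fun n => dist (g n wstar) (g n 0)) (𝒰 : Filter ℕ)
      (𝓝 (dist (G wstar) (G 0))) := (hG wstar).dist (hG 0)
  have hdiff0 : Tendsto (fun n => dist (g n (w n)) (g n 0) - dist (g n wstar) (g n 0))
      (𝒰 : Filter ℕ) (𝓝 0) := by
    apply squeeze_zero_norm' (a := fun n => 8 * dist (w n) wstar)
    · filter_upwards [hlipm 1] with n hn
      have h1 : dist (g n (w n)) (g n wstar) ≤ 8 * Complex.abs (w n - wstar) :=
        hn (w n) (hcb2 (hwmem n)) wstar (hcb2 hwstar_mem)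
      rw [← Complex.dist_eq_abs] at h1
      calc ‖dist (g n (w n)) (g n 0) - dist (g n wstar) (g n 0)‖
          = |dist (g n (w n)) (g n 0) - dist (g n wstar) (g n 0)| := Real.norm_eq_abs _
        _ ≤ dist (g n (w n)) (g n wstar) := abs_dist_sub_le _ _ _
        _ ≤ 8 * dist (w n) wstar := h1
    · have h2 := tendsto_iff_dist_tendsto_zero.mp hwtend
      have h3 := h2.const_mul (8:ℝ)
      simpa using h3
  have hD : Tendsto (fun n => dist (g n (w n)) (g n 0)) (𝒰 : Filter ℕ)
      (𝓝 (dist (G wstar) (G 0))) := by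
    have h3 := hE.add hdiff0
    rw [add_zero] at h3
    have h4 : (fun n => dist (g n wstar) (g n 0) +
        (dist (g n (w n)) (g n 0) - dist (g n wstar) (g n 0)))
        = fun n => dist (g n (w n)) (g n 0) := by funext n; ring
    rwa [h4] at h3
  have hge : ε₁ ≤ dist (G wstar) (G 0) :=
    ge_of_tendsto hD (Filter.Eventually.of_forall (fun n => hwd n))
  have hconst := hBrody G hGdiff wstar 0
  rw [hconst] at hge
  simp at hge
  linarith

lemma abs_one_sub_le {a b : ℂ} (ha : Complex.abs a < 1) :
    Complex.abs (1 - (starRingEnd ℂ) a * b)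
      ≤ 2 * (1 - Complex.abs a) + Complex.abs (a - b) := by
  have hdecomp : 1 - (starRingEnd ℂ) a * b
      = (1 - (starRingEnd ℂ) a * a) + (starRingEnd ℂ) a * (a - b) := by ring
  have h1 : (starRingEnd ℂ) a * a = ((Complex.normSq a : ℝ) : ℂ) := by
    rw [mul_comm]; exact Complex.mul_conj a
  have h2 : Complex.abs (1 - (starRingEnd ℂ) a * a) = 1 - Complex.abs a ^ 2 := by
    rw [h1, show (1 : ℂ) - ((Complex.normSq a : ℝ) : ℂ) = (((1 - Complex.normSq a : ℝ)) : ℂ) by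
      push_cast; ring]
    rw [Complex.abs_ofReal, abs_of_nonneg]
    · rw [← Complex.sq_abs]
    · rw [← Complex.sq_abs]; nlinarith [Complex.abs.nonneg a]
  calc Complex.abs (1 - (starRingEnd ℂ) a * b)
      ≤ Complex.abs (1 - (starRingEnd ℂ) a * a) + Complex.abs ((starRingEnd ℂ) a * (a - b)) := by
        rw [hdecomp]; exact Complex.abs.add_le _ _
    _ = (1 - Complex.abs a ^ 2) + Complex.abs a * Complex.abs (a - b) := by
        rw [h2, map_mul, Complex.abs_conj]
    _ ≤ 2 * (1 - Complex.abs a) + Complex.abs (a - b) := by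
        nlinarith [Complex.abs.nonneg a, Complex.abs.nonneg (a - b)]


set_option maxHeartbeats 1000000 in

lemma uniform_lipschitz [CompactSpace V] (hδ : IsAdmissible E V)
    (hBrody : ∀ g : ℂ → V, MDifferentiable 𝓘(ℂ, ℂ) 𝓘(ℂ, E) g → ∀ x y : ℂ, g x = g y) :
    ∃ C : ℝ, 0 < C ∧ ∀ f : ℂ → V, Holo E f →
      ∀ a ∈ ball (0:ℂ) 1, ∀ b ∈ ball (0:ℂ) 1,
        dist (f a) (f b) ≤ C * poincareDist a b := by
  obtain ⟨Ufam, hU⟩ := hδ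
  have hadm : ∀ x : V, ∀ p q : V, p ∈ Ufam x → q ∈ Ufam x →
      ENNReal.ofReal (dist p q) ≤ kobayashiDistOn E (Ufam x) p q := fun x => (hU x).2.2.2
  obtain ⟨ε₀, hε₀0, hLeb0⟩ := lebesgue_number_lemma_of_metric isCompact_univ
    (fun x => (hU x).2.1) (fun y _ => mem_iUnion.mpr ⟨y, (hU y).1⟩)
  have hLeb : ∀ y : V, ∃ x, ball y ε₀ ⊆ Ufam x := fun y => hLeb0 y (mem_univ y)
  obtain ⟨η, hη0, hη1, hA⟩ := claimA hadm hLeb hBrody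
    (by positivity : (0:ℝ) < ε₀/2) (by linarith)
  set D := Metric.diam (univ : Set V) with hDdef
  have hD0 : 0 ≤ D := Metric.diam_nonneg
  refine ⟨(24 + 34*(D+1))/η, by positivity, ?_⟩
  intro f hf a ha b hb
  have ha1 : Complex.abs a < 1 := by
    have := mem_ball_zero_iff.mp ha; rwa [Complex.norm_eq_abs] at this
  have hb1 : Complex.abs b < 1 := by
    have := mem_ball_zero_iff.mp hb; rwa [Complex.norm_eq_abs] at this
  set t' : ℝ := 1 - Complex.abs a with ht'def
  have ht'0 : 0 < t' := by rw [ht'def]; linarith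
  have hρ0 : 0 ≤ poincareDist a b := poincareDist_nonneg a b
  have hden_pos : 0 < Complex.abs (1 - (starRingEnd ℂ) a * b) :=
    lt_of_le_of_lt (Complex.abs.nonneg _) (abs_sub_lt_abs_one_sub ha hb)
  have hs1 : Complex.abs (a - b) / Complex.abs (1 - (starRingEnd ℂ) a * b) < 1 :=
    (div_lt_one hden_pos).mpr (abs_sub_lt_abs_one_sub ha hb)
  have harct := half_le_arctanh (by positivity) hs1
  have hden_le : Complex.abs (1 - (starRingEnd ℂ) a * b)
      ≤ 2 * t' + Complex.abs (a - b) := by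
    have := abs_one_sub_le (b := b) ha1
    rw [ht'def]; linarith
  -- oscillation control from claimA
  have hosc : ∀ w' ∈ ball a (η * t'), dist (f w') (f a) ≤ ε₀/2 := by
    intro w' hw'
    have hfa : Holo E (fun ζ => f (a + (t' : ℂ) * ζ)) := by
      apply holo_comp_affine hf
      intro w hw
      rw [mem_ball_zero_iff, Complex.norm_eq_abs] at hw ⊢
      calc Complex.abs (a + (t':ℂ) * w)
          ≤ Complex.abs a + Complex.abs ((t':ℂ) * w) := Complex.abs.add_le _ _
        _ < Complex.abs a + t' := by
            rw [map_mul, Complex.abs_ofReal, abs_of_pos ht'0]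
            nlinarith
        _ = 1 := by rw [ht'def]; ring
    have hw'' : (w' - a)/((t':ℝ):ℂ) ∈ ball (0:ℂ) η := by
      rw [mem_ball_zero_iff, Complex.norm_eq_abs, map_div₀, Complex.abs_ofReal,
        abs_of_pos ht'0, div_lt_iff₀ ht'0]
      have h1 := mem_ball_iff_norm.mp hw'
      rw [Complex.norm_eq_abs] at h1
      linarith [h1]
    have h2 := hA _ hfa _ hw''
    have e1 : a + ((t':ℝ):ℂ) * ((w' - a)/((t':ℝ):ℂ)) = w' := by
      have : ((t':ℝ):ℂ) ≠ 0 := by exact_mod_cast ht'0.ne'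
      field_simp
      ring
    have e2 : a + ((t':ℝ):ℂ) * (0:ℂ) = a := by ring
    simp only [e1, e2] at h2
    exact h2
  rcases le_or_gt (Complex.abs (a - b)) (η * t' / 8) with hcase | hcase
  · -- Lipschitz case
    have hd1 : dist (f a) (f b) ≤ 4 * Complex.abs (a - b) / (η * t') := by
      apply lipschitz_of_small_osc hadm hLeb hf (by positivity : (0:ℝ) < η * t')
      · intro y hy
        rw [mem_ball_zero_iff, Complex.norm_eq_abs]
        have h1 := mem_ball_iff_norm.mp hy
        rw [Complex.norm_eq_abs] at h1
        have h2 : Complex.abs y ≤ Complex.abs a + Complex.abs (y - a) := by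
          calc Complex.abs y = Complex.abs (a + (y - a)) := by ring_nf
            _ ≤ _ := Complex.abs.add_le _ _
        nlinarith
      · intro w hw
        exact lt_of_le_of_lt (hosc w hw) (by linarith)
      · exact mem_ball_self (by positivity)
      · rw [mem_ball, dist_eq_norm, Complex.norm_eq_abs, Complex.abs.map_sub]
        calc Complex.abs (a - b) ≤ η * t' / 8 := hcase
          _ < η * t' / 4 := by nlinarith
    have hlow : Complex.abs (a - b) ≤ 6 * t' * poincareDist a b := by
      have hden_le3 : Complex.abs (1 - (starRingEnd ℂ) a * b) ≤ 3 * t' := by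
        have : Complex.abs (a - b) ≤ t' := by nlinarith
        linarith
      have hs2 : Complex.abs (a - b) / (3 * t')
          ≤ Complex.abs (a - b) / Complex.abs (1 - (starRingEnd ℂ) a * b) := by
        rw [div_le_div_iff₀ (by positivity) hden_pos]
        nlinarith [Complex.abs.nonneg (a - b)]
      rw [poincareDist_eq]
      have h3 : Complex.abs (a - b) / (3 * t') / 2
          ≤ arctanh (Complex.abs (a - b) / Complex.abs (1 - (starRingEnd ℂ) a * b)) := by
        calc Complex.abs (a - b) / (3 * t') / 2
            ≤ Complex.abs (a - b) / Complex.abs (1 - (starRingEnd ℂ) a * b) / 2 := by linarith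
          _ ≤ _ := harct
      rw [div_le_iff₀ (by positivity : (0:ℝ) < 3*t')] at *
      nlinarith [h3]
    calc dist (f a) (f b) ≤ 4 * Complex.abs (a - b) / (η * t') := hd1
      _ ≤ 4 * (6 * t' * poincareDist a b) / (η * t') := by
          rw [div_le_div_iff₀ (by positivity) (by positivity)]
          nlinarith [mul_le_mul_of_nonneg_left hlow (by positivity : (0:ℝ) ≤ 4*(η*t'))]
      _ = 24 / η * poincareDist a b := by field_simp; ring
      _ ≤ (24 + 34*(D+1))/η * poincareDist a b := by
          apply mul_le_mul_of_nonneg_right ?_ hρ0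
          rw [div_le_div_iff₀ hη0 hη0]
          nlinarith
  · -- diameter case
    have hρlow : η/34 ≤ poincareDist a b := by
      have h1 : Complex.abs (a - b) / (2 * t' + Complex.abs (a - b))
          ≤ Complex.abs (a - b) / Complex.abs (1 - (starRingEnd ℂ) a * b) := by
        rw [div_le_div_iff₀ (by positivity) hden_pos]
        nlinarith [Complex.abs.nonneg (a - b)]
      have h2 : (η * t' / 8) / (2 * t' + η * t' / 8)
          ≤ Complex.abs (a - b) / (2 * t' + Complex.abs (a - b)) := by
        rw [div_le_div_iff₀ (by positivity) (by positivity)]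
        nlinarith
      have h3 : (η * t' / 8) / (2 * t' + η * t' / 8) = η / (16 + η) := by
        rw [div_eq_div_iff (by positivity) (by positivity)]
        ring
      have h4 : η / 17 ≤ η / (16 + η) := by
        rw [div_le_div_iff₀ (by norm_num) (by positivity)]
        nlinarith
      have h5 : η / 17 ≤ Complex.abs (a - b) / Complex.abs (1 - (starRingEnd ℂ) a * b) := by
        rw [← h3] at h4
        linarith
      rw [poincareDist_eq]
      calc η/34 = (η/17)/2 := by ring
        _ ≤ Complex.abs (a - b) / Complex.abs (1 - (starRingEnd ℂ) a * b) / 2 := by linarith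
        _ ≤ _ := harct
    have hdD : dist (f a) (f b) ≤ D :=
      Metric.dist_le_diam_of_mem isCompact_univ.isBounded trivial trivial
    have hkey : (34*(D+1)/η) * (η/34) = D + 1 := by
      field_simp
    calc dist (f a) (f b) ≤ D := hdD
      _ ≤ (34*(D+1)/η) * (η/34) := by rw [hkey]; linarith
      _ ≤ (34*(D+1)/η) * poincareDist a b := by
          apply mul_le_mul_of_nonneg_left hρlow (by positivity)
      _ ≤ (24 + 34*(D+1))/η * poincareDist a b := by
          apply mul_le_mul_of_nonneg_right ?_ hρ0
          rw [div_le_div_iff₀ hη0 hη0]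
          nlinarith


end Admissible
end Brody


theorem statement_9 {E : Type*} [NormedAddCommGroup E] [NormedSpace ℂ E]
    [FiniteDimensional ℂ E]
    (V : Type*) [MetricSpace V] [ChartedSpace E V] [IsManifold 𝓘(ℂ, E) (⊤ : WithTop ℕ∞) V]
    [CompactSpace V] [ConnectedSpace V] (hδ : IsAdmissible E V)
    (hBrody : ∀ g : ℂ → V, MDifferentiable 𝓘(ℂ, ℂ) 𝓘(ℂ, E) g → ∀ x y : ℂ, g x = g y) :
    ∀ p q : V, p ≠ q → 0 < kobayashiDistOn E (Set.univ : Set V) p q := by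
  intro p q hpq
  obtain ⟨C, hC0, hC⟩ := Brody.uniform_lipschitz hδ hBrody
  have hdpq : 0 < dist p q := dist_pos.mpr hpq
  have hlow : ENNReal.ofReal (dist p q / C) ≤ kobayashiDistOn E (Set.univ : Set V) p q := by
    unfold kobayashiDistOn
    refine le_iInf fun m => le_iInf fun f => le_iInf fun ab => le_iInf fun hdiff =>
      le_iInf fun _him => le_iInf fun hmem => le_iInf fun hp => le_iInf fun hq =>
      le_iInf fun hchain => ?_
    apply ENNReal.ofReal_le_ofReal
    rw [div_le_iff₀ hC0]
    -- telescoping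
    classical
    set u : ℕ → V := fun i => if h : i < m + 1 then f ⟨i, h⟩ (ab ⟨i, h⟩).1 else q with hudef
    set ρfun : ℕ → ℝ := fun i =>
      if h : i < m + 1 then poincareDist (ab ⟨i, h⟩).1 (ab ⟨i, h⟩).2 else 0 with hρdef
    have hu0 : u 0 = p := by
      rw [hudef]
      simp only [Nat.succ_pos, dif_pos]
      convert hp using 2 <;> simp [Fin.ext_iff]
    have huM : u (m+1) = q := by
      rw [hudef]; simp
    have hstep : ∀ i, i < m + 1 → dist (u i) (u (i+1)) ≤ C * ρfun i := by
      intro i hi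
      have hui : u i = f ⟨i, hi⟩ (ab ⟨i, hi⟩).1 := by rw [hudef]; simp [hi]
      have hρi : ρfun i = poincareDist (ab ⟨i, hi⟩).1 (ab ⟨i, hi⟩).2 := by
        rw [hρdef]; simp [hi]
      have hui1 : u (i+1) = f ⟨i, hi⟩ (ab ⟨i, hi⟩).2 := by
        rcases lt_or_ge (i+1) (m+1) with h1 | h1
        · have hchain' := hchain ⟨i, by omega⟩
          rw [hudef]
          simp only [h1, dif_pos]
          have e1 : (⟨i, by omega⟩ : Fin m).castSucc = ⟨i, hi⟩ := rfl
          have e2 : (⟨i, by omega⟩ : Fin m).succ = ⟨i+1, h1⟩ := rfl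
          rw [e1, e2] at hchain'
          exact hchain'.symm
        · have him : i = m := by omega
          rw [hudef]
          simp only [show ¬ (i+1 < m+1) by omega, dif_neg, not_false_iff]
          have e3 : (⟨i, hi⟩ : Fin (m+1)) = Fin.last m := by
            apply Fin.ext; simp [him]
          rw [e3, ← hq]
      rw [hui, hui1, hρi]
      exact hC (f ⟨i, hi⟩) (hdiff ⟨i, hi⟩) _ (hmem ⟨i, hi⟩).1 _ (hmem ⟨i, hi⟩).2
    have htel : dist p q ≤ ∑ i ∈ Finset.range (m+1), dist (u i) (u (i+1)) := by
      rw [← hu0, ← huM]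
      exact dist_le_range_sum_dist u (m+1)
    have hsum1 : ∑ i ∈ Finset.range (m+1), dist (u i) (u (i+1))
        ≤ ∑ i ∈ Finset.range (m+1), C * ρfun i := by
      apply Finset.sum_le_sum
      intro i hi
      exact hstep i (Finset.mem_range.mp hi)
    have hsum2 : ∑ i ∈ Finset.range (m+1), C * ρfun i
        = C * ∑ j : Fin (m+1), poincareDist (ab j).1 (ab j).2 := by
      rw [← Finset.mul_sum]
      congr 1
      rw [← Fin.sum_univ_eq_sum_range ρfun (m+1)]
      apply Finset.sum_congr rfl
      intro j _
      rw [hρdef]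
      simp only [j.isLt, dif_pos, Fin.eta]
    calc dist p q ≤ ∑ i ∈ Finset.range (m+1), dist (u i) (u (i+1)) := htel
      _ ≤ ∑ i ∈ Finset.range (m+1), C * ρfun i := hsum1
      _ = C * ∑ j : Fin (m+1), poincareDist (ab j).1 (ab j).2 := hsum2
      _ = (∑ j : Fin (m+1), poincareDist (ab j).1 (ab j).2) * C := by ring
  calc (0:ℝ≥0∞) < ENNReal.ofReal (dist p q / C) := by
        rw [ENNReal.ofReal_pos]; positivity
    _ ≤ _ := hlow


end
end

section
/- Let d_{𝔻∖{0}} denote the Kobayashi pseudodistance of the punctured unit disc 𝔻∖{0} regarded as a complex manifold. Then sup{ d_{𝔻∖{0}}(z,w) : |z| = |w| = r } → 0 as r → 0⁺; in other words, the diameter of the circle {z : |z| = r} with respect to d_{𝔻∖{0}} tends to 0 as r tends to 0. -/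
open Filter Metric Set Topology
open scoped Manifold ENNReal

noncomputable section

private lemma arctanh_mono' {a b : ℝ} (ha : 0 ≤ a) (hab : a ≤ b) (hb : b < 1) :
    arctanh a ≤ arctanh b := by
  unfold arctanh
  have h1 : (0:ℝ) < 1 - b := by linarith
  have h2 : (0:ℝ) < 1 - a := by linarith
  have h3 : (1+a)/(1-a) ≤ (1+b)/(1-b) := div_le_div₀ (by linarith) (by linarith) h1 (by linarith)
  have h4 : (0:ℝ) < (1+a)/(1-a) := by positivity
  have := Real.log_le_log h4 h3
  linarith

private lemma kob_key {r : ℝ} (hr0 : 0 < r) (hr : Real.pi < Real.log r⁻¹) {z w : ℂ}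
    (hz : ‖z‖ = r) (hw : ‖w‖ = r) :
    kobayashiDistOn ℂ (ball (0:ℂ) 1 \ {0}) z w ≤
      ENNReal.ofReal (arctanh (Real.pi / Real.log r⁻¹)) := by
  set T : ℝ := Real.log r⁻¹ with hT
  have hTpos : 0 < T := lt_trans Real.pi_pos hr
  have hz0 : z ≠ 0 := by
    intro h; rw [h] at hz; simp at hz; exact hr0.ne hz
  set θ : ℝ := Complex.arg (w / z) with hθdef
  have hθ : |θ| ≤ Real.pi := Complex.abs_arg_le_pi _
  have habswz : ‖w / z‖ = 1 := by
    rw [norm_div, hz, hw, div_self hr0.ne']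
  have hwz : w = z * Complex.exp (θ * Complex.I) := by
    have := Complex.norm_mul_exp_arg_mul_I (w / z)
    rw [habswz] at this
    field_simp at this ⊢
    rw [← hθdef] at this
    rw [← this]; push_cast; ring
  set f : ℂ → ℂ := fun ζ => z * Complex.exp (Complex.I * T * ζ) with hf
  set c : ℂ := ((θ / T : ℝ) : ℂ) with hc
  have habsc : ‖c‖ = |θ| / T := by
    rw [hc, Complex.norm_real, Real.norm_eq_abs, abs_div, abs_of_pos hTpos]
  have hcball : c ∈ ball (0 : ℂ) 1 := by
    rw [mem_ball, dist_zero_right, habsc]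
    rw [div_lt_one hTpos]
    exact lt_of_le_of_lt hθ hr
  have hfc : f c = w := by
    have hT0 : (T : ℂ) ≠ 0 := by exact_mod_cast hTpos.ne'
    have h2 : Complex.I * (T:ℂ) * c = θ * Complex.I := by
      rw [hc]
      push_cast
      rw [mul_assoc, mul_div_cancel₀ _ hT0, mul_comm]
    show z * Complex.exp (Complex.I * (T:ℂ) * c) = w
    rw [h2]
    exact hwz.symm
  have hf0 : f 0 = z := by simp [hf]
  have himg : f '' ball (0:ℂ) 1 ⊆ ball (0:ℂ) 1 \ {0} := by
    rintro x ⟨ζ, hζ, rfl⟩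
    have him : -1 < ζ.im := by
      rw [mem_ball, dist_zero_right] at hζ
      have := Complex.abs_im_le_norm ζ
      have := abs_lt.mp (lt_of_le_of_lt this hζ)
      linarith [this.1]
    have habsf : ‖f ζ‖ = r * Real.exp (-(T * ζ.im)) := by
      rw [hf]
      simp only [norm_mul, hz, Complex.norm_exp]
      congr 2
      simp [Complex.mul_re, Complex.mul_im]
    constructor
    · rw [mem_ball, dist_zero_right]
      rw [habsf]
      have h1 : Real.exp (-(T * ζ.im)) < Real.exp T := by
        apply Real.exp_lt_exp.mpr; nlinarith
      calc r * Real.exp (-(T * ζ.im)) < r * Real.exp T :=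
            mul_lt_mul_of_pos_left h1 hr0
        _ = r * r⁻¹ := by rw [hT, Real.exp_log (inv_pos.mpr hr0)]
        _ = 1 := mul_inv_cancel₀ hr0.ne'
    · simp only [mem_singleton_iff]
      exact mul_ne_zero hz0 (Complex.exp_ne_zero _)
  have hdiff : MDifferentiableOn 𝓘(ℂ, ℂ) 𝓘(ℂ, ℂ) f (ball (0:ℂ) 1) := by
    rw [mdifferentiableOn_iff_differentiableOn]
    exact ((Complex.differentiable_exp.comp
      ((differentiable_const _).mul differentiable_id)).const_mul z).differentiableOn
  have key1 : kobayashiDistOn ℂ (ball (0:ℂ) 1 \ {0}) z w ≤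
      ENNReal.ofReal (∑ j : Fin 1, poincareDist ((fun _ : Fin 1 => ((0:ℂ), c)) j).1
        ((fun _ : Fin 1 => ((0:ℂ), c)) j).2) := by
    unfold kobayashiDistOn
    refine iInf_le_of_le 0 (iInf_le_of_le (fun _ => f) (iInf_le_of_le (fun _ => ((0:ℂ), c)) ?_))
    exact iInf_le_of_le (fun _ => hdiff) (iInf_le_of_le (fun _ => himg)
      (iInf_le_of_le (fun _ => ⟨mem_ball_self one_pos, hcball⟩)
      (iInf_le_of_le hf0 (iInf_le_of_le hfc (iInf_le_of_le (fun j => j.elim0) le_rfl)))))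
  refine key1.trans (ENNReal.ofReal_le_ofReal ?_)
  rw [Fin.sum_univ_one]
  have : poincareDist 0 c = arctanh ‖c‖ := by
    unfold poincareDist
    congr 1
    simp
  rw [this, habsc]
  exact arctanh_mono' (by positivity) ((div_le_div_iff_of_pos_right hTpos).mpr hθ)
    ((div_lt_one hTpos).mpr hr)

theorem statement_16 :
    Tendsto
      (fun r : ℝ => ⨆ (z : ℂ) (_ : ‖z‖ = r) (w : ℂ) (_ : ‖w‖ = r),
        kobayashiDistOn ℂ (ball (0 : ℂ) 1 \ {0}) z w)
      (𝓝[>] (0 : ℝ)) (𝓝 0) := by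
  have hb : Tendsto (fun r : ℝ => ENNReal.ofReal (arctanh (Real.pi / Real.log r⁻¹)))
      (𝓝[>] (0:ℝ)) (𝓝 0) := by
    have h1 : Tendsto (fun r : ℝ => Real.log r⁻¹) (𝓝[>] 0) atTop :=
      Real.tendsto_log_atTop.comp tendsto_inv_nhdsGT_zero
    have h2 : Tendsto (fun r : ℝ => Real.pi / Real.log r⁻¹) (𝓝[>] 0) (𝓝 0) :=
      Tendsto.div_atTop tendsto_const_nhds h1
    have h3 : Tendsto arctanh (𝓝 0) (𝓝 0) := by
      have : ContinuousAt arctanh 0 := by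
        unfold arctanh
        fun_prop (disch := norm_num)
      simpa [arctanh] using this.tendsto
    have := ENNReal.tendsto_ofReal (h3.comp h2)
    simpa using this
  refine tendsto_of_tendsto_of_tendsto_of_le_of_le'
    (tendsto_const_nhds (x := (0:ℝ≥0∞))) hb
    (Eventually.of_forall fun r => zero_le) ?_
  filter_upwards [Ioo_mem_nhdsGT_of_mem (Set.mem_Ico.mpr
    ⟨le_rfl, Real.exp_pos (-(Real.pi + 1))⟩)] with r hr
  obtain ⟨hr0, hr1⟩ := hr
  have hlog : Real.pi < Real.log r⁻¹ := by
    have := Real.log_lt_log hr0 hr1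
    rw [Real.log_exp] at this
    rw [Real.log_inv]
    linarith
  refine iSup_le fun z => iSup_le fun hz => iSup_le fun w => iSup_le fun hw => ?_
  exact kob_key hr0 hlog hz hw
end
end
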